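/- (L̃_C is a coupling operator of L_C.) Let κ > 0 and fix x₀, y₀ ∈ ℝ^d. Define L_C f(w) = ∫ (f(w+z) − f(w) − ⟨∇f(w), z⟩ 1_{|z|≤1}(z)) min(c(x₀,z), c(y₀,z)) ν(dz) for f ∈ C_b²(ℝ^d). Then for all f, g ∈ C_b²(ℝ^d), setting h(x,y) := f(x) + g(y), one has L̃_C h(x₀, y₀) = L_C f(x₀) + L_C g(y₀). -/

import Mathlib

open MeasureTheory Set
open scoped ENNReal RealInnerProductSpace

noncomputable section

/-- `ℝ^d` as a Euclidean space. -/
abbrev Ed (d : ℕ) := EuclideanSpace ℝ (Fin d)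

/-- A Lévy measure on `ℝ^d`. -/
def IsLevyMeasure {d : ℕ} (ν : Measure (Ed d)) : Prop :=
  ν {0} = 0 ∧ ∫⁻ z, ENNReal.ofReal (min 1 (‖z‖ ^ 2)) ∂ν < ⊤

/-- `ν_u := ν ∧ (δ_u ∗ ν)`. -/
def nuShift {d : ℕ} (ν : Measure (Ed d)) (u : Ed d) : Measure (Ed d) :=
  ν ⊓ ν.map (fun w => w + u)

/-- `c(x,y,u,z) = min(c(x,z), c(y,z), c(x,z−u), c(y,z−u))`. -/
def cmin {d : ℕ} (c : Ed d → Ed d → ℝ) (x y u z : Ed d) : ℝ :=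
  min (min (c x z) (c y z)) (min (c x (z - u)) (c y (z - u)))

/-- `μ_{x,y,u}(dz) = c(x,y,u,z) ν_u(dz)`. -/
def muXYU {d : ℕ} (ν : Measure (Ed d)) (c : Ed d → Ed d → ℝ) (x y u : Ed d) :
    Measure (Ed d) :=
  (nuShift ν u).withDensity (fun z => ENNReal.ofReal (cmin c x y u z))

/-- `ν̃_{x,y}(dz) = min(c(x,z), c(y,z)) ν(dz)`. -/
def nuTilde {d : ℕ} (ν : Measure (Ed d)) (c : Ed d → Ed d → ℝ) (x y : Ed d) :
    Measure (Ed d) :=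
  ν.withDensity (fun z => ENNReal.ofReal (min (c x z) (c y z)))

/-- `c̃(x,y,z) = c(x,z) − min(c(x,z), c(y,z))`. -/
def ctilde {d : ℕ} (c : Ed d → Ed d → ℝ) (x y z : Ed d) : ℝ :=
  c x z - min (c x z) (c y z)

/-- `(x−y)_κ = min(1, κ/|x−y|) (x−y)`. -/
def kap {d : ℕ} (κ : ℝ) (v : Ed d) : Ed d := (min 1 (κ / ‖v‖)) • v



/-! ### Auxiliary lemmas -/

section AuxGeneral
variable {α : Type*} [MeasurableSpace α]

lemma aux_map_inf_equiv (e : α ≃ᵐ α) (μ ν : Measure α) :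
    (μ ⊓ ν).map e = μ.map e ⊓ ν.map e := by
  refine le_antisymm (le_inf (Measure.map_mono inf_le_left e.measurable)
    (Measure.map_mono inf_le_right e.measurable)) ?_
  have h1 : ((μ.map e ⊓ ν.map e).map e.symm) ≤ μ ⊓ ν := by
    refine le_inf ?_ ?_
    · simpa [MeasurableEquiv.map_symm_map] using
        Measure.map_mono (inf_le_left : μ.map e ⊓ ν.map e ≤ μ.map e) e.symm.measurable
    · simpa [MeasurableEquiv.map_symm_map] using
        Measure.map_mono (inf_le_right : μ.map e ⊓ ν.map e ≤ ν.map e) e.symm.measurable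
  calc μ.map e ⊓ ν.map e = ((μ.map e ⊓ ν.map e).map e.symm).map e :=
        (MeasurableEquiv.map_map_symm e).symm
    _ ≤ (μ ⊓ ν).map e := Measure.map_mono h1 e.measurable

lemma aux_withDensity_map_equiv (e : α ≃ᵐ α) (μ : Measure α) {g : α → ℝ≥0∞}
    (hg : Measurable g) :
    (μ.withDensity g).map e = (μ.map e).withDensity (g ∘ e.symm) := by
  ext s hs
  rw [Measure.map_apply e.measurable hs, withDensity_apply _ (e.measurable hs),
      withDensity_apply _ hs, setLIntegral_map hs (hg.comp e.symm.measurable) e.measurable]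
  simp [Function.comp]

end AuxGeneral

section AuxEd
variable {d : ℕ}

/-- translation as a measurable equiv -/
def trEquiv (v : Ed d) : Ed d ≃ᵐ Ed d := (Homeomorph.addRight v).toMeasurableEquiv

lemma trEquiv_coe (v : Ed d) : ⇑(trEquiv v) = fun z => z + v := rfl

lemma trEquiv_symm_coe (v : Ed d) : ⇑(trEquiv v).symm = fun z => z - v := by
  funext z; simp [trEquiv, sub_eq_add_neg]; rfl

lemma cont_c_slice {c : Ed d → Ed d → ℝ} (hc : Continuous fun p : Ed d × Ed d => c p.1 p.2)
    (x : Ed d) : Continuous (c x) :=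
  hc.comp (continuous_const.prodMk continuous_id)

lemma cmin_continuous {c : Ed d → Ed d → ℝ} (hc : Continuous fun p : Ed d × Ed d => c p.1 p.2)
    (x y u : Ed d) : Continuous (cmin c x y u) := by
  have h1 := cont_c_slice hc x
  have h2 := cont_c_slice hc y
  have hsub : Continuous fun z : Ed d => z - u := continuous_id.sub continuous_const
  exact ((h1.min h2).min ((h1.comp hsub).min (h2.comp hsub)))

lemma muXYU_map (ν : Measure (Ed d)) {c : Ed d → Ed d → ℝ}
    (hc : Continuous fun p : Ed d × Ed d => c p.1 p.2) (x y u : Ed d) :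
    (muXYU ν c x y u).map (fun z => z + (-u)) = muXYU ν c x y (-u) := by
  have hg : Measurable fun z => ENNReal.ofReal (cmin c x y u z) :=
    ENNReal.measurable_ofReal.comp (cmin_continuous hc x y u).measurable
  have : (fun z : Ed d => z + (-u)) = ⇑(trEquiv (-u)) := (trEquiv_coe _).symm
  rw [this, muXYU, aux_withDensity_map_equiv _ _ hg]
  have hbase : (nuShift ν u).map (trEquiv (-u)) = nuShift ν (-u) := by
    rw [nuShift, aux_map_inf_equiv]
    have h1 : ν.map (trEquiv (-u)) = ν.map (fun z => z + (-u)) := by rw [trEquiv_coe]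
    have h2 : (ν.map fun w => w + u).map (trEquiv (-u)) = ν := by
      rw [trEquiv_coe, Measure.map_map (measurable_add_const _) (measurable_add_const _)]
      simp
    rw [h1, h2, inf_comm, nuShift]
  rw [hbase]
  congr 1
  funext z
  have hz : (trEquiv (-u)).symm z = z + u := by
    rw [trEquiv_symm_coe]; simp [sub_neg_eq_add]
  simp only [Function.comp, hz]
  congr 1
  simp only [cmin, add_sub_cancel_right, sub_neg_eq_add]
  exact min_comm _ _

lemma norm_fderiv_fderiv_le {f : Ed d → ℝ} {M : ℝ}
    (hM : ∀ x, ‖iteratedFDeriv ℝ 2 f x‖ ≤ M) (w : Ed d) : ‖fderiv ℝ (fderiv ℝ f) w‖ ≤ M := by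
  have hM0 : 0 ≤ M := le_trans (norm_nonneg _) (hM w)
  have H2 : ∀ v v2 : Ed d, ‖fderiv ℝ (fderiv ℝ f) w v v2‖ ≤ M * ‖v‖ * ‖v2‖ := by
    intro v v2
    have h := iteratedFDeriv_two_apply (𝕜 := ℝ) f w ![v, v2]
    simp only [Matrix.cons_val_zero, Matrix.cons_val_one, Matrix.head_cons] at h
    calc ‖(fderiv ℝ (fderiv ℝ f) w v) v2‖ = ‖iteratedFDeriv ℝ 2 f w ![v, v2]‖ := by rw [h]
      _ ≤ ‖iteratedFDeriv ℝ 2 f w‖ * ∏ i, ‖![v, v2] i‖ :=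
          ContinuousMultilinearMap.le_opNorm _ _
      _ ≤ M * (‖v‖ * ‖v2‖) := by
          rw [Fin.prod_univ_two]
          simp only [Matrix.cons_val_zero, Matrix.cons_val_one, Matrix.head_cons]
          exact mul_le_mul_of_nonneg_right (hM w) (by positivity)
      _ = M * ‖v‖ * ‖v2‖ := by ring
  exact ContinuousLinearMap.opNorm_le_bound _ hM0 fun v =>
    ContinuousLinearMap.opNorm_le_bound _ (mul_nonneg hM0 (norm_nonneg v)) (H2 v)

lemma taylor_bound {f : Ed d → ℝ} (hf : ContDiff ℝ 2 f) {M2 : ℝ}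
    (h2 : ∀ x, ‖iteratedFDeriv ℝ 2 f x‖ ≤ M2) (x z : Ed d) :
    |f (x + z) - f x - fderiv ℝ f x z| ≤ M2 * ‖z‖ ^ 2 := by
  have hM0 : 0 ≤ M2 := le_trans (norm_nonneg _) (h2 x)
  set q : Ed d → ℝ := fun w => f (x + w) - f x - fderiv ℝ f x w with hq
  have hdf : Differentiable ℝ f := hf.differentiable (by norm_num)
  have hd : ∀ w : Ed d, HasFDerivAt q (fderiv ℝ f (x + w) - fderiv ℝ f x) w := by
    intro w
    have h1 : HasFDerivAt (fun w : Ed d => f (x + w)) (fderiv ℝ f (x + w)) w := by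
      have hcomp := (hdf (x + w)).hasFDerivAt.comp w
        ((hasFDerivAt_id w).const_add x)
      simpa [Function.comp_def] using hcomp
    exact (h1.sub_const (f x)).sub (fderiv ℝ f x).hasFDerivAt
  have hlip : ∀ w : Ed d, ‖fderiv ℝ f (x + w) - fderiv ℝ f x‖ ≤ M2 * ‖w‖ := by
    intro w
    have hdiff : ∀ y ∈ (univ : Set (Ed d)), DifferentiableAt ℝ (fderiv ℝ f) y := by
      intro y _
      exact ((hf.fderiv_right (m := 1) (by norm_num)).differentiable (by norm_num)) y
    have := convex_univ.norm_image_sub_le_of_norm_fderiv_le hdiff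
      (fun y _ => norm_fderiv_fderiv_le h2 y) (mem_univ x) (mem_univ (x + w))
    simpa using this
  have key : ‖q z - q 0‖ ≤ (M2 * ‖z‖) * ‖z - 0‖ := by
    refine (convex_closedBall (0 : Ed d) ‖z‖).norm_image_sub_le_of_norm_hasFDerivWithin_le
      (fun w _ => (hd w).hasFDerivWithinAt) (fun w hw => ?_) ?_ ?_
    · refine le_trans (hlip w) (mul_le_mul_of_nonneg_left ?_ hM0)
      simpa [Metric.mem_closedBall, dist_zero_right] using hw
    · simp [Metric.mem_closedBall, norm_nonneg]
    · simp [Metric.mem_closedBall, dist_zero_right]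
  have hq0 : q 0 = 0 := by simp [hq]
  rw [hq0, sub_zero, sub_zero] at key
  calc |f (x + z) - f x - fderiv ℝ f x z| = ‖q z‖ := rfl
    _ ≤ M2 * ‖z‖ * ‖z‖ := key
    _ = M2 * ‖z‖ ^ 2 := by ring

lemma phi_abs_bound {f : Ed d → ℝ} (hf : ContDiff ℝ 2 f) {M0 M2 : ℝ}
    (h0 : ∀ x, |f x| ≤ M0) (h2 : ∀ x, ‖iteratedFDeriv ℝ 2 f x‖ ≤ M2) (x z : Ed d) :
    |f (x + z) - f x - (if ‖z‖ ≤ 1 then fderiv ℝ f x z else 0)|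
      ≤ (2 * M0 + M2) * min 1 (‖z‖ ^ 2) := by
  have hM0 : 0 ≤ M0 := le_trans (abs_nonneg _) (h0 x)
  have hM2 : 0 ≤ M2 := le_trans (norm_nonneg _) (h2 x)
  by_cases hz : ‖z‖ ≤ 1
  · rw [if_pos hz]
    have hmin : min 1 (‖z‖ ^ 2) = ‖z‖ ^ 2 := by
      rw [min_eq_right]
      calc ‖z‖ ^ 2 ≤ 1 ^ 2 := by
            exact pow_le_pow_left₀ (norm_nonneg _) hz 2
        _ = 1 := one_pow 2
    rw [hmin]
    refine le_trans (taylor_bound hf h2 x z) ?_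
    have : 0 ≤ ‖z‖ ^ 2 := by positivity
    nlinarith
  · rw [if_neg hz]
    have hmin : min 1 (‖z‖ ^ 2) = 1 := by
      rw [min_eq_left]
      nlinarith [norm_nonneg z, not_le.mp hz]
    rw [hmin, mul_one, sub_zero]
    calc |f (x + z) - f x| ≤ |f (x + z)| + |f x| := abs_sub _ _
      _ ≤ M0 + M0 := add_le_add (h0 _) (h0 _)
      _ ≤ 2 * M0 + M2 := by linarith

lemma phi_measurable {f : Ed d → ℝ} (hf : ContDiff ℝ 2 f) (x : Ed d) :
    Measurable (fun z : Ed d => f (x + z) - f x - (if ‖z‖ ≤ 1 then fderiv ℝ f x z else 0)) := by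
  have h1 : Measurable fun z : Ed d => f (x + z) :=
    (hf.continuous.comp (continuous_const.add continuous_id)).measurable
  have hset : MeasurableSet {z : Ed d | ‖z‖ ≤ 1} :=
    (isClosed_le continuous_norm continuous_const).measurableSet
  have h2 : Measurable fun z : Ed d => (if ‖z‖ ≤ 1 then fderiv ℝ f x z else 0) :=
    Measurable.ite hset (fderiv ℝ f x).continuous.measurable measurable_const
  exact (h1.sub measurable_const).sub h2

lemma integrable_phi {ν : Measure (Ed d)} (hν2 : ∫⁻ z, ENNReal.ofReal (min 1 (‖z‖ ^ 2)) ∂ν < ⊤)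
    {m : Measure (Ed d)} {cUp : ℝ} (hm : m ≤ ENNReal.ofReal cUp • ν)
    {f : Ed d → ℝ} (hf : ContDiff ℝ 2 f) {M0 M2 : ℝ}
    (h0 : ∀ x, |f x| ≤ M0) (h2 : ∀ x, ‖iteratedFDeriv ℝ 2 f x‖ ≤ M2) (x : Ed d) :
    Integrable (fun z => f (x + z) - f x - (if ‖z‖ ≤ 1 then fderiv ℝ f x z else 0)) m := by
  have hmin_nonneg : ∀ z : Ed d, 0 ≤ min 1 (‖z‖ ^ 2) := fun z =>
    le_min zero_le_one (by positivity)
  have hmin_int : Integrable (fun z : Ed d => min 1 (‖z‖ ^ 2)) m := by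
    constructor
    · exact (continuous_const.min (continuous_norm.pow 2)).measurable.aestronglyMeasurable
    · refine lt_of_le_of_lt (le_trans (le_of_eq ?_)
        (lintegral_mono' hm (le_refl fun z => ENNReal.ofReal (min 1 (‖z‖ ^ 2))))) ?_
      · exact lintegral_congr fun z => (Real.enorm_eq_ofReal (hmin_nonneg z))
      · rw [lintegral_smul_measure]
        exact ENNReal.mul_lt_top ENNReal.ofReal_lt_top hν2
  refine Integrable.mono' (hmin_int.const_mul (2 * M0 + M2))
    (phi_measurable hf x).aestronglyMeasurable ?_
  refine Filter.Eventually.of_forall fun z => ?_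
  rw [Real.norm_eq_abs]
  exact phi_abs_bound hf h0 h2 x z

lemma muXYU_le_nuTilde (ν : Measure (Ed d)) (c : Ed d → Ed d → ℝ) (x y u : Ed d) :
    muXYU ν c x y u ≤ nuTilde ν c x y := by
  rw [Measure.le_iff]
  intro s hs
  rw [muXYU, nuTilde, withDensity_apply _ hs, withDensity_apply _ hs]
  calc ∫⁻ z in s, ENNReal.ofReal (cmin c x y u z) ∂(nuShift ν u)
      ≤ ∫⁻ z in s, ENNReal.ofReal (min (c x z) (c y z)) ∂(nuShift ν u) :=
        lintegral_mono fun z => ENNReal.ofReal_le_ofReal (min_le_left _ _)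
    _ ≤ ∫⁻ z in s, ENNReal.ofReal (min (c x z) (c y z)) ∂ν :=
        lintegral_mono' (Measure.restrict_mono Subset.rfl inf_le_left) le_rfl

lemma nuTilde_le_smul (ν : Measure (Ed d)) (c : Ed d → Ed d → ℝ) {cUp : ℝ}
    (hb : ∀ x z, c x z ≤ cUp) (x y : Ed d) :
    nuTilde ν c x y ≤ ENNReal.ofReal cUp • ν := by
  rw [Measure.le_iff]
  intro s hs
  rw [nuTilde, withDensity_apply _ hs, Measure.smul_apply, smul_eq_mul]
  calc ∫⁻ z in s, ENNReal.ofReal (min (c x z) (c y z)) ∂ν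
      ≤ ∫⁻ _ in s, ENNReal.ofReal cUp ∂ν :=
        lintegral_mono fun z =>
          ENNReal.ofReal_le_ofReal (le_trans (min_le_left _ _) (hb x z))
    _ = ENNReal.ofReal cUp * ν s := by rw [setLIntegral_const]

lemma integral_nuTilde (ν : Measure (Ed d)) {c : Ed d → Ed d → ℝ}
    (hc : Continuous fun p : Ed d × Ed d => c p.1 p.2)
    (hpos : ∀ x z, 0 ≤ c x z) (x y : Ed d) (φ : Ed d → ℝ) :
    ∫ z, φ z ∂(nuTilde ν c x y) = ∫ z, φ z * min (c x z) (c y z) ∂ν := by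
  have hw : Continuous fun z => min (c x z) (c y z) :=
    (cont_c_slice hc x).min (cont_c_slice hc y)
  have hmeas : Measurable fun z : Ed d => (min (c x z) (c y z)).toNNReal :=
    measurable_real_toNNReal.comp hw.measurable
  have : nuTilde ν c x y
      = ν.withDensity (fun z => ((min (c x z) (c y z)).toNNReal : ℝ≥0∞)) := rfl
  rw [this, integral_withDensity_eq_integral_smul hmeas]
  refine integral_congr_ae (Filter.Eventually.of_forall fun z => ?_)
  show (min (c x z) (c y z)).toNNReal • φ z = φ z * min (c x z) (c y z)
  rw [NNReal.smul_def, smul_eq_mul,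
    Real.coe_toNNReal _ (le_min (hpos x z) (hpos y z)), mul_comm]

lemma nu_far_finite {ν : Measure (Ed d)} (hν2 : ∫⁻ z, ENNReal.ofReal (min 1 (‖z‖ ^ 2)) ∂ν < ⊤)
    {r : ℝ} (hr : 0 < r) : ν {w : Ed d | r ≤ ‖w‖} < ⊤ := by
  set ε : ℝ≥0∞ := ENNReal.ofReal (min 1 (r ^ 2)) with hε
  have hε0 : ε ≠ 0 := by
    simp only [hε, ne_eq, ENNReal.ofReal_eq_zero, not_le]
    exact lt_min one_pos (by positivity)
  have hsub : {w : Ed d | r ≤ ‖w‖} ⊆ {w | ε ≤ ENNReal.ofReal (min 1 (‖w‖ ^ 2))} := by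
    intro w hw
    exact ENNReal.ofReal_le_ofReal
      (min_le_min le_rfl (pow_le_pow_left₀ hr.le hw 2))
  calc ν {w : Ed d | r ≤ ‖w‖} ≤ ν {w | ε ≤ ENNReal.ofReal (min 1 (‖w‖ ^ 2))} :=
        measure_mono hsub
    _ ≤ (∫⁻ z, ENNReal.ofReal (min 1 (‖z‖ ^ 2)) ∂ν) / ε :=
        meas_ge_le_lintegral_div
          ((ENNReal.measurable_ofReal.comp
            (continuous_const.min (continuous_norm.pow 2)).measurable).aemeasurable)
          hε0 (by simp [hε])
    _ < ⊤ := ENNReal.div_lt_top hν2.ne hε0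

lemma muXYU_finite {ν : Measure (Ed d)} (hν2 : ∫⁻ z, ENNReal.ofReal (min 1 (‖z‖ ^ 2)) ∂ν < ⊤)
    (c : Ed d → Ed d → ℝ) {cUp : ℝ} (hb : ∀ x z, c x z ≤ cUp)
    (x y : Ed d) {u : Ed d} (hu : u ≠ 0) : IsFiniteMeasure (muXYU ν c x y u) := by
  have hru : 0 < ‖u‖ / 2 := by simpa using norm_pos_iff.mpr hu
  set r : ℝ := ‖u‖ / 2 with hrdef
  have hfar := nu_far_finite hν2 hru
  have hshift : nuShift ν u univ < ⊤ := by
    have hsplit : nuShift ν u univ ≤ nuShift ν u (Metric.ball 0 r)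
        + nuShift ν u (Metric.ball 0 r)ᶜ := by
      rw [← union_compl_self (Metric.ball (0 : Ed d) r)] ; exact measure_union_le _ _
    have h1 : nuShift ν u (Metric.ball 0 r) ≤ ν {w : Ed d | r ≤ ‖w‖} := by
      calc nuShift ν u (Metric.ball 0 r) ≤ (ν.map (fun w => w + u)) (Metric.ball 0 r) :=
            Measure.le_iff'.mp inf_le_right _
        _ = ν ((fun w => w + u) ⁻¹' Metric.ball 0 r) :=
            Measure.map_apply (measurable_add_const u) measurableSet_ball
        _ ≤ ν {w : Ed d | r ≤ ‖w‖} := by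
            refine measure_mono fun w hw => ?_
            simp only [mem_preimage, Metric.mem_ball, dist_zero_right] at hw
            have htri : ‖u‖ ≤ ‖w + u‖ + ‖w‖ := by
              calc ‖u‖ = ‖(w + u) - w‖ := by rw [add_sub_cancel_left]
                _ ≤ ‖w + u‖ + ‖w‖ := norm_sub_le _ _
            simp only [mem_setOf_eq]
            have : ‖u‖ = 2 * r := by rw [hrdef]; ring
            linarith
    have h2 : nuShift ν u (Metric.ball 0 r)ᶜ ≤ ν {w : Ed d | r ≤ ‖w‖} := by
      calc nuShift ν u (Metric.ball 0 r)ᶜ ≤ ν (Metric.ball 0 r)ᶜ :=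
            Measure.le_iff'.mp inf_le_left _
        _ ≤ ν {w : Ed d | r ≤ ‖w‖} := by
            refine measure_mono fun w hw => ?_
            simp only [mem_compl_iff, Metric.mem_ball, dist_zero_right, not_lt] at hw
            exact hw
    calc nuShift ν u univ ≤ _ := hsplit
      _ ≤ ν {w : Ed d | r ≤ ‖w‖} + ν {w : Ed d | r ≤ ‖w‖} := add_le_add h1 h2
      _ < ⊤ := by exact ENNReal.add_lt_top.mpr ⟨hfar, hfar⟩
  refine ⟨?_⟩
  rw [muXYU, withDensity_apply _ MeasurableSet.univ]
  calc ∫⁻ z in univ, ENNReal.ofReal (cmin c x y u z) ∂(nuShift ν u)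
      ≤ ∫⁻ _ in univ, ENNReal.ofReal cUp ∂(nuShift ν u) :=
        lintegral_mono fun z => ENNReal.ofReal_le_ofReal
          (le_trans (min_le_left _ _) (le_trans (min_le_left _ _) (hb x z)))
    _ = ENNReal.ofReal cUp * nuShift ν u univ := by rw [setLIntegral_const]
    _ < ⊤ := ENNReal.mul_lt_top ENNReal.ofReal_lt_top hshift

end AuxEd

/-- The operator `L̃_C` (the first three integrals of the coupling operator `L̃`)
applied to `h(x,y) = f(x) + g(y)`, for which `∇_x h = ∇f(x)`, `∇_y h = ∇g(y)`. -/
def LCcoupling {d : ℕ} (ν : Measure (Ed d)) (c : Ed d → Ed d → ℝ) (κ : ℝ)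
    (f g : Ed d → ℝ) (x y : Ed d) : ℝ :=
  (1 / 2) * ∫ z, (f (x + z) + g (y + z + kap κ (x - y)) - (f x + g y)
      - (if ‖z‖ ≤ 1 then fderiv ℝ f x z else 0)
      - (if ‖z + kap κ (x - y)‖ ≤ 1 then fderiv ℝ g y (z + kap κ (x - y)) else 0))
      ∂(muXYU ν c x y (kap κ (y - x)))
  + (1 / 2) * ∫ z, (f (x + z) + g (y + z + kap κ (y - x)) - (f x + g y)
      - (if ‖z‖ ≤ 1 then fderiv ℝ f x z else 0)
      - (if ‖z + kap κ (y - x)‖ ≤ 1 then fderiv ℝ g y (z + kap κ (y - x)) else 0))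
      ∂(muXYU ν c x y (kap κ (x - y)))
  + (∫ z, (f (x + z) + g (y + z) - (f x + g y)
      - (if ‖z‖ ≤ 1 then fderiv ℝ f x z else 0)
      - (if ‖z‖ ≤ 1 then fderiv ℝ g y z else 0))
      ∂(nuTilde ν c x y - (2⁻¹ : ℝ≥0∞) • muXYU ν c x y (kap κ (x - y))
          - (2⁻¹ : ℝ≥0∞) • muXYU ν c x y (kap κ (y - x))))

/-- `L̃_C` is a coupling operator of
`L_C f(w) = ∫ (f(w+z) − f(w) − ⟨∇f(w),z⟩1_{|z|≤1}) min(c(x₀,z), c(y₀,z)) ν(dz)`: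
for `h(x,y) = f(x) + g(y)`, `L̃_C h(x₀,y₀) = L_C f(x₀) + L_C g(y₀)`. -/
theorem statement19 {d : ℕ} (ν : Measure (Ed d)) (hν : IsLevyMeasure ν)
    (c : Ed d → Ed d → ℝ) (cLo cUp : ℝ) (hcLo : 0 < cLo) (hcUp : cLo ≤ cUp)
    (hc_cont : Continuous (fun p : Ed d × Ed d => c p.1 p.2))
    (hc_bound : ∀ x z, cLo ≤ c x z ∧ c x z ≤ cUp)
    (κ : ℝ) (hκ : 0 < κ) (x₀ y₀ : Ed d)
    (f g : Ed d → ℝ) (hf : ContDiff ℝ 2 f) (hg : ContDiff ℝ 2 g)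
    (Mf0 Mf1 Mf2 Mg0 Mg1 Mg2 : ℝ)
    (hf0 : ∀ x, |f x| ≤ Mf0) (hf1 : ∀ x, ‖fderiv ℝ f x‖ ≤ Mf1)
    (hf2 : ∀ x, ‖iteratedFDeriv ℝ 2 f x‖ ≤ Mf2)
    (hg0 : ∀ x, |g x| ≤ Mg0) (hg1 : ∀ x, ‖fderiv ℝ g x‖ ≤ Mg1)
    (hg2 : ∀ x, ‖iteratedFDeriv ℝ 2 g x‖ ≤ Mg2) :
    LCcoupling ν c κ f g x₀ y₀
      = (∫ z, (f (x₀ + z) - f x₀ - (if ‖z‖ ≤ 1 then fderiv ℝ f x₀ z else 0))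
            * min (c x₀ z) (c y₀ z) ∂ν)
        + (∫ z, (g (y₀ + z) - g y₀ - (if ‖z‖ ≤ 1 then fderiv ℝ g y₀ z else 0))
            * min (c x₀ z) (c y₀ z) ∂ν) := by
  obtain ⟨hν0, hν2⟩ := hν
  have hcpos : ∀ x z, 0 ≤ c x z := fun x z => le_trans hcLo.le (hc_bound x z).1
  have hcup : ∀ x z, c x z ≤ cUp := fun x z => (hc_bound x z).2
  have hνT_le : nuTilde ν c x₀ y₀ ≤ ENNReal.ofReal cUp • ν := nuTilde_le_smul ν c hcup x₀ y₀
  have intf : ∀ m : Measure (Ed d), m ≤ ENNReal.ofReal cUp • ν →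
      Integrable (fun z => f (x₀ + z) - f x₀ - (if ‖z‖ ≤ 1 then fderiv ℝ f x₀ z else 0)) m :=
    fun m hm => integrable_phi hν2 hm hf hf0 hf2 x₀
  have intg : ∀ m : Measure (Ed d), m ≤ ENNReal.ofReal cUp • ν →
      Integrable (fun z => g (y₀ + z) - g y₀ - (if ‖z‖ ≤ 1 then fderiv ℝ g y₀ z else 0)) m :=
    fun m hm => integrable_phi hν2 hm hg hg0 hg2 y₀
  have hcomb : ∀ m : Measure (Ed d), m ≤ ENNReal.ofReal cUp • ν →
      ∫ z, (f (x₀ + z) + g (y₀ + z) - (f x₀ + g y₀)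
        - (if ‖z‖ ≤ 1 then fderiv ℝ f x₀ z else 0)
        - (if ‖z‖ ≤ 1 then fderiv ℝ g y₀ z else 0)) ∂m
      = (∫ z, (f (x₀ + z) - f x₀ - (if ‖z‖ ≤ 1 then fderiv ℝ f x₀ z else 0)) ∂m)
        + ∫ z, (g (y₀ + z) - g y₀ - (if ‖z‖ ≤ 1 then fderiv ℝ g y₀ z else 0)) ∂m := by
    intro m hm
    rw [← integral_add (intf m hm) (intg m hm)]
    congr 1
    funext z
    ring
  have intcomb : ∀ m : Measure (Ed d), m ≤ ENNReal.ofReal cUp • ν →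
      Integrable (fun z => f (x₀ + z) + g (y₀ + z) - (f x₀ + g y₀)
        - (if ‖z‖ ≤ 1 then fderiv ℝ f x₀ z else 0)
        - (if ‖z‖ ≤ 1 then fderiv ℝ g y₀ z else 0)) m := fun m hm =>
    ((intf m hm).add (intg m hm)).congr (Filter.Eventually.of_forall fun z => by
      simp only [Pi.add_apply]; ring)
  have hRf : ∫ z, (f (x₀ + z) - f x₀ - (if ‖z‖ ≤ 1 then fderiv ℝ f x₀ z else 0))
        ∂(nuTilde ν c x₀ y₀)
      = ∫ z, (f (x₀ + z) - f x₀ - (if ‖z‖ ≤ 1 then fderiv ℝ f x₀ z else 0))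
          * min (c x₀ z) (c y₀ z) ∂ν :=
    integral_nuTilde ν hc_cont hcpos x₀ y₀ _
  have hRg : ∫ z, (g (y₀ + z) - g y₀ - (if ‖z‖ ≤ 1 then fderiv ℝ g y₀ z else 0))
        ∂(nuTilde ν c x₀ y₀)
      = ∫ z, (g (y₀ + z) - g y₀ - (if ‖z‖ ≤ 1 then fderiv ℝ g y₀ z else 0))
          * min (c x₀ z) (c y₀ z) ∂ν :=
    integral_nuTilde ν hc_cont hcpos x₀ y₀ _
  by_cases hxy : x₀ = y₀
  · subst hxy
    have hA0 : kap κ (x₀ - x₀) = (0 : Ed d) := by simp [kap]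
    have hμ_eq : muXYU ν c x₀ x₀ 0 = nuTilde ν c x₀ x₀ := by
      rw [muXYU, nuTilde, nuShift]
      have hmap : ν.map (fun w : Ed d => w + 0) = ν := by
        simp only [add_zero]
        exact Measure.map_id
      rw [hmap, inf_idem]
      congr 1
      funext z
      simp [cmin, sub_zero, min_self]
    have hhalf : (2⁻¹ : ℝ≥0∞) • nuTilde ν c x₀ x₀ + (2⁻¹ : ℝ≥0∞) • nuTilde ν c x₀ x₀
        = nuTilde ν c x₀ x₀ := by
      rw [← add_smul, ENNReal.inv_two_add_inv_two, one_smul]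
    have hD0 : nuTilde ν c x₀ x₀ - (2⁻¹ : ℝ≥0∞) • nuTilde ν c x₀ x₀
        - (2⁻¹ : ℝ≥0∞) • nuTilde ν c x₀ x₀ = 0 :=
      Measure.sub_eq_zero_of_le (Measure.sub_le_of_le_add (le_of_eq hhalf.symm))
    simp only [LCcoupling, hA0, add_zero, hμ_eq, hD0, integral_zero_measure]
    have h1 := hcomb (nuTilde ν c x₀ x₀) hνT_le
    linarith [hRf, hRg]
  · -- nondegenerate case
    have hsub_ne : x₀ - y₀ ≠ 0 := sub_ne_zero.mpr hxy
    have hmin_pos : (0 : ℝ) < min 1 (κ / ‖x₀ - y₀‖) :=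
      lt_min one_pos (div_pos hκ (norm_pos_iff.mpr hsub_ne))
    have hA_ne : kap κ (x₀ - y₀) ≠ 0 := by
      rw [kap]; exact smul_ne_zero hmin_pos.ne' hsub_ne
    have hBA : kap κ (y₀ - x₀) = -kap κ (x₀ - y₀) := by
      rw [← neg_sub x₀ y₀, kap, kap, norm_neg, smul_neg]
    simp only [LCcoupling, hBA]
    set A : Ed d := kap κ (x₀ - y₀) with hAdef
    set μA : Measure (Ed d) := muXYU ν c x₀ y₀ A with hμAdef
    set μB : Measure (Ed d) := muXYU ν c x₀ y₀ (-A) with hμBdef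
    set νT : Measure (Ed d) := nuTilde ν c x₀ y₀ with hνTdef
    have hμA_le : μA ≤ νT := muXYU_le_nuTilde ν c x₀ y₀ A
    have hμB_le : μB ≤ νT := muXYU_le_nuTilde ν c x₀ y₀ (-A)
    have hμA_M : μA ≤ ENNReal.ofReal cUp • ν := hμA_le.trans hνT_le
    have hμB_M : μB ≤ ENNReal.ofReal cUp • ν := hμB_le.trans hνT_le
    haveI hFA : IsFiniteMeasure μA := muXYU_finite hν2 c hcup x₀ y₀ hA_ne
    haveI hFB : IsFiniteMeasure μB := muXYU_finite hν2 c hcup x₀ y₀ (neg_ne_zero.mpr hA_ne)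
    haveI hFA2 : IsFiniteMeasure ((2⁻¹ : ℝ≥0∞) • μA) := by
      refine ⟨?_⟩
      rw [Measure.smul_apply, smul_eq_mul]
      exact ENNReal.mul_lt_top (by norm_num) (measure_lt_top μA univ)
    haveI hFB2 : IsFiniteMeasure ((2⁻¹ : ℝ≥0∞) • μB) := by
      refine ⟨?_⟩
      rw [Measure.smul_apply, smul_eq_mul]
      exact ENNReal.mul_lt_top (by norm_num) (measure_lt_top μB univ)
    have hab : (2⁻¹ : ℝ≥0∞) • μA + (2⁻¹ : ℝ≥0∞) • μB ≤ νT := by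
      rw [Measure.le_iff]
      intro s hs
      have hA' := Measure.le_iff'.mp hμA_le s
      have hB' := Measure.le_iff'.mp hμB_le s
      simp only [Measure.coe_add, Pi.add_apply, Measure.smul_apply, smul_eq_mul]
      calc 2⁻¹ * μA s + 2⁻¹ * μB s ≤ 2⁻¹ * νT s + 2⁻¹ * νT s :=
            add_le_add (mul_le_mul_right hA' _) (mul_le_mul_right hB' _)
        _ = (2⁻¹ + 2⁻¹) * νT s := (add_mul _ _ _).symm
        _ = νT s := by rw [ENNReal.inv_two_add_inv_two, one_mul]
    have h1 : (2⁻¹ : ℝ≥0∞) • μA ≤ νT := le_trans (Measure.le_add_right le_rfl) hab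
    have h1B : (2⁻¹ : ℝ≥0∞) • μB ≤ νT := le_trans (Measure.le_add_left le_rfl) hab
    have h2 : (2⁻¹ : ℝ≥0∞) • μB ≤ νT - (2⁻¹ : ℝ≥0∞) • μA := by
      rw [Measure.sub_def]
      refine le_sInf fun t ht => ?_
      have ht' : νT ≤ t + (2⁻¹ : ℝ≥0∞) • μA := ht
      have hchain : (2⁻¹ : ℝ≥0∞) • μA + (2⁻¹ : ℝ≥0∞) • μB
          ≤ (2⁻¹ : ℝ≥0∞) • μA + t := by
        calc (2⁻¹ : ℝ≥0∞) • μA + (2⁻¹ : ℝ≥0∞) • μB ≤ νT := hab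
          _ ≤ t + (2⁻¹ : ℝ≥0∞) • μA := ht'
          _ = (2⁻¹ : ℝ≥0∞) • μA + t := add_comm _ _
      exact Measure.le_of_add_le_add_left hchain
    have hdec : (νT - (2⁻¹ : ℝ≥0∞) • μA - (2⁻¹ : ℝ≥0∞) • μB) + (2⁻¹ : ℝ≥0∞) • μB
        + (2⁻¹ : ℝ≥0∞) • μA = νT := by
      rw [Measure.sub_add_cancel_of_le h2, Measure.sub_add_cancel_of_le h1]
    have hD_M : νT - (2⁻¹ : ℝ≥0∞) • μA - (2⁻¹ : ℝ≥0∞) • μB ≤ ENNReal.ofReal cUp • ν :=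
      le_trans Measure.sub_le (le_trans Measure.sub_le hνT_le)
    have hAhalf_M : (2⁻¹ : ℝ≥0∞) • μA ≤ ENNReal.ofReal cUp • ν := h1.trans hνT_le
    have hBhalf_M : (2⁻¹ : ℝ≥0∞) • μB ≤ ENNReal.ofReal cUp • ν := h1B.trans hνT_le
    -- translation identities
    have hmapB : μB.map (⇑(trEquiv A)) = μA := by
      have h := muXYU_map ν hc_cont x₀ y₀ (-A)
      rw [trEquiv_coe]
      simpa [neg_neg] using h
    have hmapA : μA.map (⇑(trEquiv (-A))) = μB := by
      have h := muXYU_map ν hc_cont x₀ y₀ A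
      rw [trEquiv_coe]
      exact h
    have intgB : Integrable (fun z : Ed d => g (y₀ + (z + A)) - g y₀
        - (if ‖z + A‖ ≤ 1 then fderiv ℝ g y₀ (z + A) else 0)) μB := by
      have h := (integrable_map_equiv (trEquiv A) (fun w : Ed d => g (y₀ + w) - g y₀
        - (if ‖w‖ ≤ 1 then fderiv ℝ g y₀ w else 0))).mp (by rw [hmapB]; exact intg μA hμA_M)
      exact h
    have intgA : Integrable (fun z : Ed d => g (y₀ + (z + -A)) - g y₀
        - (if ‖z + -A‖ ≤ 1 then fderiv ℝ g y₀ (z + -A) else 0)) μA := by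
      have h := (integrable_map_equiv (trEquiv (-A)) (fun w : Ed d => g (y₀ + w) - g y₀
        - (if ‖w‖ ≤ 1 then fderiv ℝ g y₀ w else 0))).mp (by rw [hmapA]; exact intg μB hμB_M)
      exact h
    have hshiftB : ∫ z, (g (y₀ + (z + A)) - g y₀
        - (if ‖z + A‖ ≤ 1 then fderiv ℝ g y₀ (z + A) else 0)) ∂μB
        = ∫ z, (g (y₀ + z) - g y₀ - (if ‖z‖ ≤ 1 then fderiv ℝ g y₀ z else 0)) ∂μA := by
      rw [← hmapB, integral_map_equiv]
      rfl
    have hshiftA : ∫ z, (g (y₀ + (z + -A)) - g y₀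
        - (if ‖z + -A‖ ≤ 1 then fderiv ℝ g y₀ (z + -A) else 0)) ∂μA
        = ∫ z, (g (y₀ + z) - g y₀ - (if ‖z‖ ≤ 1 then fderiv ℝ g y₀ z else 0)) ∂μB := by
      rw [← hmapA, integral_map_equiv]
      rfl
    -- first integral
    have hT1 : ∫ z, (f (x₀ + z) + g (y₀ + z + A) - (f x₀ + g y₀)
          - (if ‖z‖ ≤ 1 then fderiv ℝ f x₀ z else 0)
          - (if ‖z + A‖ ≤ 1 then fderiv ℝ g y₀ (z + A) else 0)) ∂μB
        = (∫ z, (f (x₀ + z) - f x₀ - (if ‖z‖ ≤ 1 then fderiv ℝ f x₀ z else 0)) ∂μB)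
          + ∫ z, (g (y₀ + z) - g y₀ - (if ‖z‖ ≤ 1 then fderiv ℝ g y₀ z else 0)) ∂μA := by
      have e1 : (fun z : Ed d => f (x₀ + z) + g (y₀ + z + A) - (f x₀ + g y₀)
          - (if ‖z‖ ≤ 1 then fderiv ℝ f x₀ z else 0)
          - (if ‖z + A‖ ≤ 1 then fderiv ℝ g y₀ (z + A) else 0))
          = fun z : Ed d => (f (x₀ + z) - f x₀ - (if ‖z‖ ≤ 1 then fderiv ℝ f x₀ z else 0))
            + (g (y₀ + (z + A)) - g y₀
              - (if ‖z + A‖ ≤ 1 then fderiv ℝ g y₀ (z + A) else 0)) := by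
        funext z
        rw [← add_assoc]
        ring
      rw [e1, integral_add (intf μB hμB_M) intgB, hshiftB]
    have hT2 : ∫ z, (f (x₀ + z) + g (y₀ + z + -A) - (f x₀ + g y₀)
          - (if ‖z‖ ≤ 1 then fderiv ℝ f x₀ z else 0)
          - (if ‖z + -A‖ ≤ 1 then fderiv ℝ g y₀ (z + -A) else 0)) ∂μA
        = (∫ z, (f (x₀ + z) - f x₀ - (if ‖z‖ ≤ 1 then fderiv ℝ f x₀ z else 0)) ∂μA)
          + ∫ z, (g (y₀ + z) - g y₀ - (if ‖z‖ ≤ 1 then fderiv ℝ g y₀ z else 0)) ∂μB := by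
      have e1 : (fun z : Ed d => f (x₀ + z) + g (y₀ + z + -A) - (f x₀ + g y₀)
          - (if ‖z‖ ≤ 1 then fderiv ℝ f x₀ z else 0)
          - (if ‖z + -A‖ ≤ 1 then fderiv ℝ g y₀ (z + -A) else 0))
          = fun z : Ed d => (f (x₀ + z) - f x₀ - (if ‖z‖ ≤ 1 then fderiv ℝ f x₀ z else 0))
            + (g (y₀ + (z + -A)) - g y₀
              - (if ‖z + -A‖ ≤ 1 then fderiv ℝ g y₀ (z + -A) else 0)) := by
        funext z
        rw [← add_assoc]
        ring
      rw [e1, integral_add (intf μA hμA_M) intgA, hshiftA]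
    -- decomposition of the ν̃ integral
    have hsum : ∫ z, (f (x₀ + z) + g (y₀ + z) - (f x₀ + g y₀)
          - (if ‖z‖ ≤ 1 then fderiv ℝ f x₀ z else 0)
          - (if ‖z‖ ≤ 1 then fderiv ℝ g y₀ z else 0)) ∂νT
        = (∫ z, (f (x₀ + z) + g (y₀ + z) - (f x₀ + g y₀)
            - (if ‖z‖ ≤ 1 then fderiv ℝ f x₀ z else 0)
            - (if ‖z‖ ≤ 1 then fderiv ℝ g y₀ z else 0))
            ∂(νT - (2⁻¹ : ℝ≥0∞) • μA - (2⁻¹ : ℝ≥0∞) • μB))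
          + (2⁻¹ : ℝ) * (∫ z, (f (x₀ + z) + g (y₀ + z) - (f x₀ + g y₀)
            - (if ‖z‖ ≤ 1 then fderiv ℝ f x₀ z else 0)
            - (if ‖z‖ ≤ 1 then fderiv ℝ g y₀ z else 0)) ∂μB)
          + (2⁻¹ : ℝ) * ∫ z, (f (x₀ + z) + g (y₀ + z) - (f x₀ + g y₀)
            - (if ‖z‖ ≤ 1 then fderiv ℝ f x₀ z else 0)
            - (if ‖z‖ ≤ 1 then fderiv ℝ g y₀ z else 0)) ∂μA := by
      conv_lhs => rw [← hdec]
      rw [integral_add_measure ((intcomb _ hD_M).add_measure (intcomb _ hBhalf_M))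
          (intcomb _ hAhalf_M),
        integral_add_measure (intcomb _ hD_M) (intcomb _ hBhalf_M),
        integral_smul_measure, integral_smul_measure]
      norm_num [ENNReal.toReal_inv]
    have hc1 := hcomb νT hνT_le
    have hc2 := hcomb μA hμA_M
    have hc3 := hcomb μB hμB_M
    have hc4 := hcomb _ hD_M
    rw [hT1, hT2]
    linarith [hsum, hc1, hc2, hc3, hc4, hRf, hRg]

end
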